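/- Let X be a locally compact metrisable space with pairwise commuting continuous maps φ₁,…,φ_d : X → X and let J ⊆ {1,…,d}. Then the set X_{Jr} of J-recurrent points is dense in X if and only if X contains no nonempty J-wandering open set. -/
import Mathlib

open Filter Topology Set

/-- `phiIter φ n = φ₁^[n₁] ∘ ⋯ ∘ φ_d^[n_d]`. -/
def phiIter {X : Type*} {d : ℕ} (φ : Fin d → X → X) (n : Fin d → ℕ) : X → X :=
  (List.ofFn fun j : Fin d => (φ j)^[n j]).foldr (· ∘ ·) id

/-- A point is `J`-recurrent if `φ_{n_k}(x) → x` along a sequence strictly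
increasing in the directions of `J`. -/
def JRecurrent {X : Type*} [TopologicalSpace X] {d : ℕ} (φ : Fin d → X → X)
    (J : Set (Fin d)) (x : X) : Prop :=
  ∃ n : ℕ → Fin d → ℕ, (∀ j ∈ J, StrictMono fun k => n k j) ∧
    Tendsto (fun k => phiIter φ (n k) x) atTop (𝓝 x)

lemma phiIter_zero_dim {X : Type*} (φ : Fin 0 → X → X) (n : Fin 0 → ℕ) :
    phiIter φ n = id := rfl

lemma phiIter_succ {X : Type*} {d : ℕ} (φ : Fin (d+1) → X → X) (n : Fin (d+1) → ℕ) :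
    phiIter φ n = (φ 0)^[n 0] ∘ phiIter (fun j => φ j.succ) (fun j => n j.succ) := by
  simp [phiIter, List.ofFn_succ]

lemma phiIter_commute {X : Type*} {d : ℕ} (φ : Fin d → X → X) (g : X → X)
    (h : ∀ j, Function.Commute g (φ j)) (n : Fin d → ℕ) :
    Function.Commute g (phiIter φ n) := by
  induction d with
  | zero => rw [phiIter_zero_dim]; intro x; rfl
  | succ d ih =>
      rw [phiIter_succ]
      exact ((h 0).iterate_right _).comp_right (ih _ (fun j => h j.succ) _)

lemma phiIter_add {X : Type*} {d : ℕ} (φ : Fin d → X → X)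
    (hcomm : ∀ i j, Function.Commute (φ i) (φ j)) (n m : Fin d → ℕ) :
    phiIter φ (n + m) = phiIter φ n ∘ phiIter φ m := by
  induction d with
  | zero => rfl
  | succ d ih =>
      have hc : Function.Commute ((φ 0)^[m 0])
          (phiIter (fun j => φ j.succ) (fun j => n j.succ)) :=
        phiIter_commute _ _ (fun j => (hcomm 0 j.succ).iterate_left _) _
      funext x
      rw [phiIter_succ, phiIter_succ, phiIter_succ]
      simp only [Pi.add_apply, Function.comp_apply]
      rw [show phiIter (fun j : Fin d => φ j.succ) (fun j => n j.succ + m j.succ) x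
          = phiIter (fun j : Fin d => φ j.succ) (fun j => n j.succ)
            (phiIter (fun j : Fin d => φ j.succ) (fun j => m j.succ) x) from
        congrFun (ih _ (fun i j => hcomm i.succ j.succ) _ _) x]
      rw [Function.iterate_add_apply]
      congr 1
      exact hc _

lemma phiIter_continuous {X : Type*} [TopologicalSpace X] {d : ℕ} (φ : Fin d → X → X)
    (hcont : ∀ j, Continuous (φ j)) (n : Fin d → ℕ) : Continuous (phiIter φ n) := by
  induction d with
  | zero => rw [phiIter_zero_dim]; exact continuous_id
  | succ d ih =>
      rw [phiIter_succ]
      exact ((hcont 0).iterate _).comp (ih _ (fun j => hcont j.succ) _)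

lemma phiIter_zero {X : Type*} {d : ℕ} (φ : Fin d → X → X) :
    phiIter φ 0 = id := by
  induction d with
  | zero => rfl
  | succ d ih =>
      funext x
      rw [phiIter_succ]
      simp only [Pi.zero_apply, Function.iterate_zero, Function.comp_apply, id_eq]
      exact congrFun (ih _) x

/-- The `J`-recurrent points are dense if and only if there is no nonempty
`J`-wandering open set. -/
theorem dense_JRecurrent_iff_no_wandering {X : Type*} [TopologicalSpace X]
    [LocallyCompactSpace X] [TopologicalSpace.MetrizableSpace X] {d : ℕ}
    (φ : Fin d → X → X) (hcont : ∀ j, Continuous (φ j))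
    (hcomm : ∀ i j, Function.Commute (φ i) (φ j)) (J : Set (Fin d)) :
    Dense {x : X | JRecurrent φ J x} ↔
      ∀ V : Set X, IsOpen V →
        (∀ n : Fin d → ℕ, (∀ j ∈ J, 0 < n j) → phiIter φ n ⁻¹' V ∩ V = ∅) → V = ∅ := by
  constructor
  · -- dense → no wandering
    intro hdense V hV hW
    by_contra hne
    obtain ⟨y, hyrec, hyV⟩ := hdense.exists_mem_open hV (Set.nonempty_iff_ne_empty.2 hne)
    obtain ⟨n, hmono, hlim⟩ := hyrec
    have hev : ∀ᶠ k in atTop, phiIter φ (n k) y ∈ V := hlim.eventually (hV.mem_nhds hyV)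
    obtain ⟨k, hk1, hkV⟩ := ((eventually_ge_atTop 1).and hev).exists
    have hpos : ∀ j ∈ J, 0 < n k j := by
      intro j hj
      calc 0 ≤ n 0 j := Nat.zero_le _
        _ < n k j := hmono j hj (by omega)
    have : y ∈ phiIter φ (n k) ⁻¹' V ∩ V := ⟨hkV, hyV⟩
    rw [hW (n k) hpos] at this
    exact this
  · -- no wandering → dense
    intro hnw
    letI : MetricSpace X := TopologicalSpace.metrizableSpaceMetric X
    set A : ℕ → Set X := fun m =>
      {x | ∃ n : Fin d → ℕ, (∀ j ∈ J, m + 1 ≤ n j) ∧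
        dist (phiIter φ n x) x < 1 / (m + 1)} with hA
    have hA_open : ∀ m, IsOpen (A m) := by
      intro m
      have : A m = ⋃ n ∈ {n : Fin d → ℕ | ∀ j ∈ J, m + 1 ≤ n j},
          {x | dist (phiIter φ n x) x < 1 / (m + 1)} := by
        ext x
        simp only [hA, Set.mem_setOf_eq, Set.mem_iUnion, exists_prop]
      rw [this]
      exact isOpen_biUnion fun n _ =>
        isOpen_lt ((phiIter_continuous φ hcont n).dist continuous_id) continuous_const
    have hA_dense : ∀ m, Dense (A m) := by
      intro m
      rw [dense_iff_inter_open]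
      rintro U hU ⟨x0, hx0⟩
      set W : Set X := U ∩ Metric.ball x0 (1 / (m + 1) / 2) with hWdef
      have hWopen : IsOpen W := hU.inter Metric.isOpen_ball
      have hWne : W.Nonempty := ⟨x0, hx0, by
        rw [Metric.mem_ball, dist_self]
        positivity⟩
      have hsum : (1:ℝ) / (m + 1) / 2 + 1 / (m + 1) / 2 = 1 / (m + 1) :=
        add_halves _
      have hWdist : ∀ a ∈ W, ∀ b ∈ W, dist a b < 1 / (m + 1) := by
        rintro a ⟨-, ha⟩ b ⟨-, hb⟩
        rw [Metric.mem_ball] at ha hb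
        calc dist a b ≤ dist a x0 + dist x0 b := dist_triangle _ _ _
          _ < 1 / (m + 1) / 2 + 1 / (m + 1) / 2 := by
              refine add_lt_add ha ?_
              rw [dist_comm]; exact hb
          _ = 1 / (m + 1) := hsum
      -- iterate
      have key : ∀ k : ℕ, ∃ (V : Set X) (s : Fin d → ℕ), IsOpen V ∧ V.Nonempty ∧ V ⊆ W ∧
          (∀ j ∈ J, k ≤ s j) ∧ (∀ x ∈ V, phiIter φ s x ∈ W) := by
        intro k
        induction k with
        | zero =>
            exact ⟨W, 0, hWopen, hWne, Set.Subset.rfl, fun j _ => Nat.zero_le _,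
              fun x hx => by rw [phiIter_zero]; exact hx⟩
        | succ k ih =>
            obtain ⟨V, s, hVopen, hVne, hVW, hs, himg⟩ := ih
            have hVnotW : ¬ (∀ n : Fin d → ℕ, (∀ j ∈ J, 0 < n j) →
                phiIter φ n ⁻¹' V ∩ V = ∅) := by
              intro h
              exact hVne.ne_empty (hnw V hVopen h)
            push_neg at hVnotW
            obtain ⟨n, hnpos, hVn⟩ := hVnotW
            refine ⟨phiIter φ n ⁻¹' V ∩ V, s + n,
              ((phiIter_continuous φ hcont n).isOpen_preimage _ hVopen).inter hVopen,
              hVn, fun x hx => hVW hx.2, ?_, ?_⟩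
            · intro j hj
              have h1 := hs j hj
              have h2 := hnpos j hj
              simp only [Pi.add_apply]
              omega
            · rintro x ⟨hx1, hx2⟩
              rw [phiIter_add φ hcomm]
              exact himg _ hx1
      obtain ⟨V, s, hVopen, ⟨x, hxV⟩, hVW, hs, himg⟩ := key (m + 1)
      exact ⟨x, (hVW hxV).1, s, hs, hWdist _ (himg x hxV) _ (hVW hxV)⟩
    have hdense : Dense (⋂ m, A m) := dense_iInter_of_isOpen hA_open hA_dense
    refine hdense.mono ?_
    intro x hx
    simp only [Set.mem_iInter] at hx
    choose f hf1 hf2 using hx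
    obtain ⟨N, hNsucc⟩ : ∃ N : ℕ → ℕ,
        ∀ k, N (k + 1) = max (N k) (Finset.univ.sup (f (N k))) + 1 :=
      ⟨fun k => Nat.rec 0 (fun _ Nk => max Nk (Finset.univ.sup (f Nk)) + 1) k,
        fun k => rfl⟩
    have hNmono : ∀ k, N k < N (k + 1) := by
      intro k; rw [hNsucc]; omega
    have hNge : ∀ k, k ≤ N k := by
      intro k
      induction k with
      | zero => exact Nat.zero_le _
      | succ k ih => have := hNmono k; omega
    refine ⟨fun k => f (N k), ?_, ?_⟩
    · intro j hj
      apply strictMono_nat_of_lt_succ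
      intro k
      show f (N k) j < f (N (k + 1)) j
      have h1 : f (N k) j ≤ Finset.univ.sup (f (N k)) :=
        Finset.le_sup (Finset.mem_univ j)
      have h2 : N (k + 1) + 1 ≤ f (N (k + 1)) j := hf1 (N (k+1)) j hj
      have hgt : Finset.univ.sup (f (N k)) < N (k + 1) := by rw [hNsucc]; omega
      omega
    · rw [Metric.tendsto_atTop]
      intro ε hε
      obtain ⟨K, hK⟩ := exists_nat_one_div_lt hε
      refine ⟨K, fun k hk => ?_⟩
      have h1 := hf2 (N k)
      have h2 : (1 : ℝ) / ((N k : ℝ) + 1) ≤ 1 / ((K : ℝ) + 1) := by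
        apply one_div_le_one_div_of_le
        · positivity
        · exact_mod_cast Nat.succ_le_succ (le_trans hk (hNge k))
      exact lt_of_lt_of_le h1 (le_trans h2 (le_of_lt hK))
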